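/- arXiv:1906.09505 — 5 statements merged into one kernel-verified Lean document; each statement's English description precedes it below -/
import Mathlib

section
/- For all p ∈ (0, 1/2), for m odd with m = 2d+1, d ≥ 1, letting a = 1/p - 1, we have a * ∑_{i=0}^{d} C(m, d-i) a^{d-i} < ∑_{i=0}^{d} C(m, d+i+1) a^{d+i+1}. -/
/-! Pair the `i`-th term of the lower half with the `i`-th term of the upper half: by the symmetry
`C(2d+1, d-i) = C(2d+1, d+i+1)` they carry the same coefficient, and the powers satisfy
`a · a^(d-i) ≤ a^(d+i+1)` for `a ≥ 1`, strictly for `i ≥ 1` when `a > 1`. -/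

open Finset

section

variable {R : Type*} [CommSemiring R] [PartialOrder R] [IsStrictOrderedRing R] {a : R} {d i : ℕ}

lemma mul_choose_pow_le_choose_pow (ha : 1 ≤ a) (hi : i ≤ d) :
    a * (((2 * d + 1).choose (d - i) : R) * a ^ (d - i))
      ≤ ((2 * d + 1).choose (d + i + 1) : R) * a ^ (d + i + 1) := by
  rw [Nat.choose_symm_of_eq_add (by omega : 2 * d + 1 = (d - i) + (d + i + 1)),
    mul_left_comm, ← pow_succ']
  gcongr
  omega

lemma mul_choose_pow_lt_choose_pow (ha : 1 < a) (hi0 : 0 < i) (hi : i ≤ d) :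
    a * (((2 * d + 1).choose (d - i) : R) * a ^ (d - i))
      < ((2 * d + 1).choose (d + i + 1) : R) * a ^ (d + i + 1) := by
  rw [Nat.choose_symm_of_eq_add (by omega : 2 * d + 1 = (d - i) + (d + i + 1)),
    mul_left_comm, ← pow_succ']
  have hchoose : (0 : R) < (2 * d + 1).choose (d + i + 1) := by
    exact_mod_cast Nat.choose_pos (by omega)
  gcongr
  omega

lemma mul_sum_lower_choose_pow_lt_sum_upper (ha : 1 < a) (hd : 1 ≤ d) :
    a * ∑ i ∈ range (d + 1), ((2 * d + 1).choose (d - i) : R) * a ^ (d - i)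
      < ∑ i ∈ range (d + 1), ((2 * d + 1).choose (d + i + 1) : R) * a ^ (d + i + 1) := by
  rw [mul_sum]
  refine sum_lt_sum (fun i hi => mul_choose_pow_le_choose_pow ha.le ?_) ⟨1, ?_, ?_⟩
  · exact Nat.lt_succ_iff.mp (mem_range.mp hi)
  · exact mem_range.mpr (by omega)
  · exact mul_choose_pow_lt_choose_pow ha one_pos hd

end

lemma one_lt_one_div_sub_one {p : ℝ} (hp0 : 0 < p) (hp : p < 1 / 2) : 1 < 1 / p - 1 := by
  have : 2 < 1 / p := by rw [lt_div_iff₀ hp0]; linarith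
  linarith

theorem odd_case_aL_lt_U (p : ℝ) (hp0 : 0 < p) (hp : p < 1 / 2)
    (d m : ℕ) (hd : 1 ≤ d) (hm : m = 2 * d + 1) :
    (1 / p - 1) * ∑ i ∈ Finset.range (d + 1),
        (m.choose (d - i) : ℝ) * (1 / p - 1) ^ (d - i)
      < ∑ i ∈ Finset.range (d + 1),
        (m.choose (d + i + 1) : ℝ) * (1 / p - 1) ^ (d + i + 1) := by
  subst hm
  exact mul_sum_lower_choose_pow_lt_sum_upper (one_lt_one_div_sub_one hp0 hp) hd
end

section
/- For all p ∈ (0, 1/2), for m even with m = 2d, d ≥ 1, letting a = 1/p - 1, we have a * ∑_{i=1}^{d} C(m, d-i) a^{d-i} < ∑_{i=0}^{d} C(m, d+i) a^{d+i}. -/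
theorem even_case_aL_lt_U (p : ℝ) (hp0 : 0 < p) (hp : p < 1 / 2)
    (d m : ℕ) (hd : 1 ≤ d) (hm : m = 2 * d) :
    (1 / p - 1) * ∑ i ∈ Finset.Icc 1 d,
        (m.choose (d - i) : ℝ) * (1 / p - 1) ^ (d - i)
      < ∑ i ∈ Finset.range (d + 1),
        (m.choose (d + i) : ℝ) * (1 / p - 1) ^ (d + i) := by
  have ha : 1 < 1 / p - 1 := by
    have h2 : 2 < 1 / p := by
      rw [lt_div_iff₀ hp0]; linarith
    linarith
  set a : ℝ := 1 / p - 1 with hA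
  have ha0 : (0 : ℝ) < a := by linarith
  rw [Finset.mul_sum]
  have hsub : Finset.Icc 1 d ⊆ Finset.range (d + 1) := by
    intro x hx
    simp only [Finset.mem_Icc] at hx
    simp only [Finset.mem_range]; omega
  calc ∑ i ∈ Finset.Icc 1 d, a * ((m.choose (d - i) : ℝ) * a ^ (d - i))
      < ∑ i ∈ Finset.Icc 1 d, (m.choose (d + i) : ℝ) * a ^ (d + i) := by
        apply Finset.sum_lt_sum_of_nonempty
        · exact Finset.nonempty_Icc.2 hd
        · intro i hi
          simp only [Finset.mem_Icc] at hi
          have hle : d + i ≤ m := by omega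
          have hch : m.choose (d + i) = m.choose (d - i) := by
            rw [← Nat.choose_symm hle]
            congr 1; omega
          rw [hch]
          have hpos : (0 : ℝ) < m.choose (d - i) := by
            exact_mod_cast Nat.choose_pos (by omega)
          have hpow : a * a ^ (d - i) < a ^ (d + i) := by
            rw [← pow_succ']
            exact pow_lt_pow_right₀ ha (by omega)
          calc a * ((m.choose (d - i) : ℝ) * a ^ (d - i))
              = (m.choose (d - i) : ℝ) * (a * a ^ (d - i)) := by ring
            _ < (m.choose (d - i) : ℝ) * a ^ (d + i) :=
                mul_lt_mul_of_pos_left hpow hpos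
    _ ≤ ∑ i ∈ Finset.range (d + 1), (m.choose (d + i) : ℝ) * a ^ (d + i) := by
        apply Finset.sum_le_sum_of_subset_of_nonneg hsub
        intro i _ _
        positivity
end

section
/- For any real p ∈ (0, 1/2) and integer m ≥ 2, the fractional gain satisfies ∑_{i=⌈m/2⌉}^{m} C(m,i)(1-p)^{i-1} p^{m-i} > 1. -/
theorem fractional_gain_gt_one (p : ℝ) (hp0 : 0 < p) (hp : p < 1 / 2)
    (m : ℕ) (hm : 2 ≤ m) :
    1 < ∑ i ∈ Finset.Icc ((m + 1) / 2) m,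
      (m.choose i : ℝ) * (1 - p) ^ (i - 1) * p ^ (m - i) := by
  set x : ℝ := 1 - p with hx
  have hpx : p < x := by rw [hx]; linarith
  have hx0 : 0 < x := by linarith
  set k : ℕ := (m + 1) / 2 with hk
  have hk1 : 1 ≤ k := by omega
  have hkm : 2 * k ≤ m + 1 := by omega
  have hkm' : k ≤ m := by omega
  set S : ℝ := ∑ i ∈ Finset.Icc k m, (m.choose i : ℝ) * x ^ i * p ^ (m - i) with hS
  set T : ℝ := ∑ i ∈ Finset.range k, (m.choose i : ℝ) * x ^ i * p ^ (m - i) with hT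
  have hTS : T + S = 1 := by
    have h1 : (x + p) ^ m
        = ∑ i ∈ Finset.range (m + 1), x ^ i * p ^ (m - i) * (m.choose i : ℝ) :=
      add_pow x p m
    have h2 : x + p = 1 := by rw [hx]; ring
    rw [h2, one_pow, Finset.range_eq_Ico] at h1
    rw [← Finset.sum_Ico_consecutive _ (Nat.zero_le k) (by omega : k ≤ m + 1)] at h1
    rw [hT, hS, ← Finset.Ico_add_one_right_eq_Icc k m, Finset.range_eq_Ico]
    rw [h1]
    congr 1 <;> (apply Finset.sum_congr rfl; intros; ring)
  have key : ∀ a b : ℕ, a ≤ b → x ^ a * p ^ b ≤ x ^ b * p ^ a := by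
    intro a b hab
    have hb : b = a + (b - a) := by omega
    rw [hb, pow_add, pow_add]
    have h3 : p ^ (b - a) ≤ x ^ (b - a) := pow_le_pow_left₀ hp0.le hpx.le _
    calc x ^ a * (p ^ a * p ^ (b - a)) ≤ x ^ a * (p ^ a * x ^ (b - a)) := by
          gcongr
      _ = x ^ a * x ^ (b - a) * p ^ a := by ring
  have step1 : x * T < ∑ i ∈ Finset.range k, (m.choose i : ℝ) * x ^ (m - i) * p ^ (i + 1) := by
    rw [hT, Finset.mul_sum]
    apply Finset.sum_lt_sum
    · intro i hi
      have hik : i < k := Finset.mem_range.mp hi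
      have h4 : x ^ (i + 1) * p ^ (m - i) ≤ x ^ (m - i) * p ^ (i + 1) :=
        key (i + 1) (m - i) (by omega)
      have hc : (0 : ℝ) ≤ (m.choose i : ℝ) := Nat.cast_nonneg _
      calc x * ((m.choose i : ℝ) * x ^ i * p ^ (m - i))
          = (m.choose i : ℝ) * (x ^ (i + 1) * p ^ (m - i)) := by ring
        _ ≤ (m.choose i : ℝ) * (x ^ (m - i) * p ^ (i + 1)) := by gcongr
        _ = (m.choose i : ℝ) * x ^ (m - i) * p ^ (i + 1) := by ring
    · refine ⟨0, Finset.mem_range.mpr hk1, ?_⟩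
      simp only [Nat.choose_zero_right, Nat.cast_one, pow_zero, Nat.sub_zero, one_mul, mul_one,
        pow_one]
      have h5 : p ^ (m - 1) < x ^ (m - 1) :=
        pow_lt_pow_left₀ hpx hp0.le (by omega)
      have h6 : x * p ^ m < x ^ m * p := by
        have e1 : p ^ m = p ^ (m - 1) * p := by rw [← pow_succ]; congr 1; omega
        have e2 : x ^ m = x ^ (m - 1) * x := by rw [← pow_succ]; congr 1; omega
        rw [e1, e2]
        calc x * (p ^ (m - 1) * p) = x * p * p ^ (m - 1) := by ring
          _ < x * p * x ^ (m - 1) := mul_lt_mul_of_pos_left h5 (by positivity)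
          _ = x ^ (m - 1) * x * p := by ring
      simpa using h6
  have hinj : Set.InjOn (fun i => m - i) (Finset.range k) := by
    intro a ha b hb hab
    simp only [Finset.coe_range, Set.mem_Iio] at ha hb
    simp only at hab
    omega
  have step2 : ∑ i ∈ Finset.range k, (m.choose i : ℝ) * x ^ (m - i) * p ^ (i + 1)
      = ∑ j ∈ (Finset.range k).image (fun i => m - i),
          (m.choose j : ℝ) * x ^ j * p ^ (m - j + 1) := by
    rw [Finset.sum_image hinj]
    apply Finset.sum_congr rfl
    intro i hi
    have hik : i < k := Finset.mem_range.mp hi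
    have him : i ≤ m := by omega
    rw [Nat.choose_symm him]
    congr 2
    omega
  have step3 : ∑ j ∈ (Finset.range k).image (fun i => m - i),
        (m.choose j : ℝ) * x ^ j * p ^ (m - j + 1)
      ≤ ∑ j ∈ Finset.Icc k m, (m.choose j : ℝ) * x ^ j * p ^ (m - j + 1) := by
    apply Finset.sum_le_sum_of_subset_of_nonneg
    · intro j hj
      simp only [Finset.mem_image, Finset.mem_range] at hj
      obtain ⟨i, hik, rfl⟩ := hj
      simp only [Finset.mem_Icc]
      omega
    · intro j _ _
      positivity
  have step4 : ∑ j ∈ Finset.Icc k m, (m.choose j : ℝ) * x ^ j * p ^ (m - j + 1) = p * S := by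
    rw [hS, Finset.mul_sum]
    apply Finset.sum_congr rfl
    intro j _
    rw [pow_succ]
    ring
  have hTp : x * T < p * S := by
    calc x * T < _ := step1
      _ = _ := step2
      _ ≤ _ := step3
      _ = p * S := step4
  have hTlt : T < p := by nlinarith [hTp, hTS]
  have hSgt : x < S := by linarith
  have hmul : x * (∑ i ∈ Finset.Icc k m, (m.choose i : ℝ) * x ^ (i - 1) * p ^ (m - i)) = S := by
    rw [hS, Finset.mul_sum]
    apply Finset.sum_congr rfl
    intro i hi
    have hik : k ≤ i := (Finset.mem_Icc.mp hi).1
    have hxx : x * x ^ (i - 1) = x ^ i := by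
      rw [← pow_succ']
      congr 1
      omega
    calc x * ((m.choose i : ℝ) * x ^ (i - 1) * p ^ (m - i))
        = (m.choose i : ℝ) * (x * x ^ (i - 1)) * p ^ (m - i) := by ring
      _ = (m.choose i : ℝ) * x ^ i * p ^ (m - i) := by rw [hxx]
  rw [← mul_lt_mul_iff_right₀ hx0, mul_one, hmul]
  exact hSgt
end

section
/- For odd m = 2d+1 with d ≥ 1 and any real a > 1, (a+1)^m < (1/a + 1) * ∑_{i=d+1}^{m} C(m,i) a^i. -/
/-!
Split the binomial expansion of `(a + 1) ^ (2d + 1)` into its lower half `L` (powers `a ^ i`,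
`i ≤ d`) and upper half `U`. Reflecting `i ↦ 2d + 1 - i` matches the term `C(m, i) a ^ i` of `L`
with the term `C(m, i) a ^ (2d + 1 - i)` of `U`, and `a ^ (i + 1) ≤ a ^ (2d + 1 - i)` for `a ≥ 1`,
strictly for `i = 0` once `d ≥ 1`. Hence `a L < U`, i.e. `L + U < U / a + U`.
-/

open Finset

theorem sum_Icc_eq_sum_range_reflect {M : Type*} [AddCommMonoid M] (f : ℕ → M) (d : ℕ) :
    ∑ i ∈ Icc (d + 1) (2 * d + 1), f i = ∑ i ∈ range (d + 1), f (2 * d + 1 - i) := by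
  rw [← Nat.Ico_zero_eq_range, sum_Ico_reflect f 0 (by omega : d + 1 ≤ 2 * d + 1 + 1)]
  congr 1
  ext i
  simp only [mem_Icc, mem_Ico]
  omega

theorem add_one_pow_eq_sum_range_add_sum_Icc {R : Type*} [CommSemiring R] (x : R) {d n : ℕ}
    (h : d ≤ n) :
    (x + 1) ^ n = ∑ i ∈ range (d + 1), (n.choose i : R) * x ^ i
      + ∑ i ∈ Icc (d + 1) n, (n.choose i : R) * x ^ i := by
  rw [← Ico_add_one_right_eq_Icc, sum_range_add_sum_Ico _ (by omega : d + 1 ≤ n + 1), add_pow]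
  simp only [one_pow, mul_one, mul_comm]

theorem mul_sum_range_choose_mul_pow_lt_sum_Icc {R : Type*} [CommSemiring R] [PartialOrder R]
    [IsStrictOrderedRing R] {a : R} (ha : 1 < a) {d : ℕ} (hd : 1 ≤ d) :
    a * ∑ i ∈ range (d + 1), ((2 * d + 1).choose i : R) * a ^ i
      < ∑ i ∈ Icc (d + 1) (2 * d + 1), ((2 * d + 1).choose i : R) * a ^ i := by
  rw [sum_Icc_eq_sum_range_reflect, mul_sum]
  refine sum_lt_sum (fun i hi => ?_) ⟨0, by simp, ?_⟩
  · have hi : i ≤ d := Nat.lt_succ_iff.mp (mem_range.mp hi)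
    rw [Nat.choose_symm (by omega), mul_left_comm, ← pow_succ']
    exact mul_le_mul_of_nonneg_left (pow_le_pow_right₀ ha.le (by omega)) (Nat.cast_nonneg _)
  · simpa using pow_lt_pow_right₀ ha (by omega : 1 < 2 * d + 1)

theorem key_inequality_odd (d m : ℕ) (hd : 1 ≤ d) (hm : m = 2 * d + 1)
    (a : ℝ) (ha : 1 < a) :
    (a + 1) ^ m < (1 / a + 1) * ∑ i ∈ Finset.Icc (d + 1) m, (m.choose i : ℝ) * a ^ i := by
  subst hm
  rw [add_one_pow_eq_sum_range_add_sum_Icc a (by omega : d ≤ 2 * d + 1)]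
  set L := ∑ i ∈ range (d + 1), ((2 * d + 1).choose i : ℝ) * a ^ i
  set U := ∑ i ∈ Icc (d + 1) (2 * d + 1), ((2 * d + 1).choose i : ℝ) * a ^ i
  have hL : L < U / a := (lt_div_iff₀ (by linarith)).2 <| by
    linarith [mul_sum_range_choose_mul_pow_lt_sum_Icc ha hd]
  calc L + U < U / a + U := by linarith
    _ = (1 / a + 1) * U := by ring
end

section
/- For p ∈ (0, 1/2) and any integers m ≥ 1 and k ≥ 1, the majority-rule path correctness probability satisfies (1 - p_m)^k (1 - q_m)^k > (1-p)^k (1-q)^k, whenever q ∈ (0, 1/2), where p_m and q_m are the majority error probabilities for recognition and advice respectively. -/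
/-!
Write `s = 1 - p > p`, let `w i = C(m,i) s^i p^(m-i)` be the binomial weights and `t = ⌈m/2⌉`.
The claim `s < ∑_{i ≥ t} w i` is equivalent, since the weights sum to `1`, to
`s · ∑_{i < t} w i < p · ∑_{i ≥ t} w i`. This follows by pairing each minority outcome `i < t`
with its mirror image `m - i ≥ t`: as `m - i ≥ i + 1`, we get `s · w i ≤ p · w (m - i)`,
strictly so for `i = 0` once `m ≥ 2`. Raising to the `k`-th power preserves the strict inequality.
-/

open Finset

def binomialWeight (m : ℕ) (s p : ℝ) (i : ℕ) : ℝ :=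
  m.choose i * s ^ i * p ^ (m - i)

namespace binomialWeight

variable {m i : ℕ} {s p : ℝ}

lemma nonneg (hs : 0 ≤ s) (hp : 0 ≤ p) : 0 ≤ binomialWeight m s p i := by
  unfold binomialWeight; positivity

lemma sum_range (h : s + p = 1) : ∑ i ∈ range (m + 1), binomialWeight m s p i = 1 := by
  calc ∑ i ∈ range (m + 1), binomialWeight m s p i = (s + p) ^ m := by
        rw [add_pow]
        exact sum_congr rfl fun i _ => by unfold binomialWeight; ring
    _ = 1 := by rw [h, one_pow]

lemma mul_and_mul_mirror_eq {e : ℕ} (h : m = 2 * i + 1 + e) :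
    s * binomialWeight m s p i = m.choose i * s ^ (i + 1) * p ^ (i + 1) * p ^ e ∧
      p * binomialWeight m s p (m - i) = m.choose i * s ^ (i + 1) * p ^ (i + 1) * s ^ e := by
  subst h
  have hsymm : (2 * i + 1 + e).choose (2 * i + 1 + e - i) = (2 * i + 1 + e).choose i :=
    Nat.choose_symm (by omega)
  unfold binomialWeight
  rw [hsymm, show 2 * i + 1 + e - i = i + 1 + e by omega,
    show 2 * i + 1 + e - (i + 1 + e) = i by omega]
  constructor <;> ring

lemma mul_le_mul_mirror (hp : 0 ≤ p) (hps : p ≤ s) (hi : 2 * i < m) :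
    s * binomialWeight m s p i ≤ p * binomialWeight m s p (m - i) := by
  obtain ⟨hl, hr⟩ := mul_and_mul_mirror_eq (s := s) (p := p)
    (show m = 2 * i + 1 + (m - (2 * i + 1)) by omega)
  rw [hl, hr]
  have hs : 0 ≤ s := hp.trans hps
  exact mul_le_mul_of_nonneg_left (pow_le_pow_left₀ hp hps _) (by positivity)

lemma mul_lt_mul_mirror (hp : 0 < p) (hps : p < s) (hi : 2 * i + 1 < m) :
    s * binomialWeight m s p i < p * binomialWeight m s p (m - i) := by
  obtain ⟨hl, hr⟩ := mul_and_mul_mirror_eq (s := s) (p := p)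
    (show m = 2 * i + 1 + (m - (2 * i + 1)) by omega)
  rw [hl, hr]
  have hs : 0 < s := hp.trans hps
  have hchoose : (0 : ℝ) < m.choose i := by exact_mod_cast Nat.choose_pos (by omega)
  gcongr
  omega

lemma mul_sum_minority_lt (hp : 0 < p) (hps : p < s) (hm : 2 ≤ m) :
    s * ∑ i ∈ range ((m + 1) / 2), binomialWeight m s p i
      < p * ∑ i ∈ Icc ((m + 1) / 2) m, binomialWeight m s p i := by
  have hmirror : Set.InjOn (fun i => m - i) (range ((m + 1) / 2)) := by
    intro a ha b hb hab
    simp only [coe_range, Set.mem_Iio] at ha hb hab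
    omega
  calc s * ∑ i ∈ range ((m + 1) / 2), binomialWeight m s p i
      = ∑ i ∈ range ((m + 1) / 2), s * binomialWeight m s p i := mul_sum _ _ _
    _ < ∑ i ∈ range ((m + 1) / 2), p * binomialWeight m s p (m - i) := by
      refine sum_lt_sum (fun i hi => mul_le_mul_mirror hp.le hps.le ?_) ⟨0, ?_, ?_⟩
      · rw [mem_range] at hi; omega
      · rw [mem_range]; omega
      · exact mul_lt_mul_mirror hp hps (by omega)
    _ = ∑ j ∈ (range ((m + 1) / 2)).image (m - ·), p * binomialWeight m s p j :=
      (sum_image (f := fun j => p * binomialWeight m s p j) hmirror).symm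
    _ ≤ ∑ j ∈ Icc ((m + 1) / 2) m, p * binomialWeight m s p j := by
      refine sum_le_sum_of_subset_of_nonneg ?_ fun j _ _ =>
        mul_nonneg hp.le (nonneg (hp.le.trans hps.le) hp.le)
      intro j hj
      obtain ⟨i, hi, rfl⟩ := mem_image.mp hj
      rw [mem_range] at hi
      rw [mem_Icc]
      omega
    _ = p * ∑ j ∈ Icc ((m + 1) / 2) m, binomialWeight m s p j := (mul_sum _ _ _).symm

lemma one_sub_lt_sum_majority (hp0 : 0 < p) (hp : p < 1 / 2) (hm : 2 ≤ m) :
    1 - p < ∑ i ∈ Icc ((m + 1) / 2) m, binomialWeight m (1 - p) p i := by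
  have htotal : ∑ i ∈ range ((m + 1) / 2), binomialWeight m (1 - p) p i
      + ∑ i ∈ Icc ((m + 1) / 2) m, binomialWeight m (1 - p) p i = 1 := by
    rw [← Ico_add_one_right_eq_Icc, sum_range_add_sum_Ico _ (by omega)]
    exact sum_range (sub_add_cancel 1 p)
  set L := ∑ i ∈ range ((m + 1) / 2), binomialWeight m (1 - p) p i
  set S := ∑ i ∈ Icc ((m + 1) / 2) m, binomialWeight m (1 - p) p i
  have hminority := mul_sum_minority_lt hp0 (by linarith : p < 1 - p) hm
  calc 1 - p = (1 - p) * (L + S) := by rw [htotal, mul_one]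
    _ < p * S + (1 - p) * S := by rw [mul_add]; linarith
    _ = S := by ring

end binomialWeight

theorem swarm_path_correctness_gt (p q : ℝ)
    (hp0 : 0 < p) (hp : p < 1 / 2) (hq0 : 0 < q) (hq : q < 1 / 2)
    (m k : ℕ) (hm : 2 ≤ m) (hk : 1 ≤ k) :
    (1 - p) ^ k * (1 - q) ^ k
      < (1 - (1 - ∑ i ∈ Finset.Icc ((m + 1) / 2) m,
            (m.choose i : ℝ) * (1 - p) ^ i * p ^ (m - i))) ^ k
        * (1 - (1 - ∑ i ∈ Finset.Icc ((m + 1) / 2) m,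
            (m.choose i : ℝ) * (1 - q) ^ i * q ^ (m - i))) ^ k := by
  simp only [sub_sub_cancel]
  have hP := binomialWeight.one_sub_lt_sum_majority hp0 hp hm
  have hQ := binomialWeight.one_sub_lt_sum_majority hq0 hq hm
  unfold binomialWeight at hP hQ
  have hq1 : 0 < 1 - q := by linarith
  exact mul_lt_mul (pow_lt_pow_left₀ hP (by linarith) (by omega))
    (pow_le_pow_left₀ hq1.le hQ.le k) (pow_pos hq1 k) (pow_nonneg (by linarith) k)
end
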